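/- arXiv:2306.03613 — 2 statements merged into one kernel-verified Lean document; each statement's English description precedes it below -/
import Mathlib

section
/- A multipartite uniform clutter C with parts V1,...,Vn is ideal if and only if all of its localizations are ideal, where a localization is any minor obtained from C by contracting exactly one element from each part Vi. -/
/-!
No member of `C / J` meets `J`, and `Q(C / J)` lies in `Q(C)` and contains every point of `Q(C)`
vanishing on `J`; hence the extreme points of `Q(C / J)` are those of `Q(C)` vanishing on `J`, and
idealness passes to contractions. Conversely, let `x` be an extreme point of `Q(C)`. If `x` has
a zero in every part, it is an extreme point of the localization contracting these zeros. Otherwise `x ≥ μ • 1_{V_i}` for some part `V_i` and some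
`μ > 0`; as `1_{V_i}` is tight on every member, either `μ ≥ 1` and `x ≥ 1_{V_i}`, or
`x = μ • 1_{V_i} + (1 - μ) • z` with `z ∈ Q(C)`. In both cases extremality forces `x = 1_{V_i}`.
-/

open scoped Classical
noncomputable section

/-- Membership in the set covering polyhedron `Q(C)`. -/
def MemQ {V : Type*} (C : Finset (Finset V)) (x : V → ℝ) : Prop :=
  (∀ v, 0 ≤ x v) ∧ ∀ A ∈ C, 1 ≤ ∑ v ∈ A, x v

/-- An extreme point of `Q(C)`. -/
def IsExtremePt {V : Type*} (C : Finset (Finset V)) (x : V → ℝ) : Prop :=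
  MemQ C x ∧ ∀ y z : V → ℝ, MemQ C y → MemQ C z →
    (x = fun v => (y v + z v) / 2) → y = z

/-- A clutter is ideal if every extreme point of `Q(C)` is integral. -/
def IdealClutter {V : Type*} (C : Finset (Finset V)) : Prop :=
  ∀ x : V → ℝ, IsExtremePt C x → ∀ v, ∃ k : ℤ, x v = (k : ℝ)

/-- The inclusion-wise minimal sets of a family. -/
def minimalSets {V : Type*} (F : Finset (Finset V)) : Finset (Finset V) :=
  F.filter fun A => ∀ B ∈ F, B ⊆ A → B = A

/-- The minor `C \ I / J` obtained after deleting `I` and contracting `J`. -/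
def minorCl {V : Type*} (C : Finset (Finset V)) (I J : Finset V) : Finset (Finset V) :=
  minimalSets ((C.filter fun A => A ∩ I = ∅).image fun A => A \ J)

open Filter Topology

section Polyhedron

variable {V : Type*} {C : Finset (Finset V)}

theorem convex_memQ : Convex ℝ {x : V → ℝ | MemQ C x} := by
  rintro y ⟨hy0, hy⟩ z ⟨hz0, hz⟩ a b ha hb hab
  refine ⟨fun v => ?_, fun A hA => ?_⟩
  · simp only [Pi.add_apply, Pi.smul_apply, smul_eq_mul]
    exact add_nonneg (mul_nonneg ha (hy0 v)) (mul_nonneg hb (hz0 v))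
  · simp only [Pi.add_apply, Pi.smul_apply, smul_eq_mul, Finset.sum_add_distrib,
      ← Finset.mul_sum]
    calc (1 : ℝ) = a * 1 + b * 1 := by rw [mul_one, mul_one, hab]
      _ ≤ _ := by gcongr <;> [exact hy A hA; exact hz A hA]

namespace IsExtremePt

variable {x u : V → ℝ}

theorem eq_of_mem_openSegment (hx : IsExtremePt C x) {y z : V → ℝ} (hy : MemQ C y)
    (hz : MemQ C z) (hxyz : x ∈ openSegment ℝ y z) : y = z := by
  obtain ⟨a, b, ha, hb, hab, rfl⟩ := hxyz
  -- `a • y + b • z` is the midpoint of the points at parameters `a ± t` of the segment.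
  set t := min a b
  have hta : t ≤ a := min_le_left a b
  have htb : t ≤ b := min_le_right a b
  have ht : 0 < t := lt_min ha hb
  have hmid := hx.2 ((a + t) • y + (b - t) • z) ((a - t) • y + (b + t) • z)
    (convex_memQ hy hz (by linarith) (by linarith) (by linarith))
    (convex_memQ hy hz (by linarith) (by linarith) (by linarith))
    (by funext v; simp only [Pi.add_apply, Pi.smul_apply, smul_eq_mul]; ring)
  funext v
  have hv := congrFun hmid v
  simp only [Pi.add_apply, Pi.smul_apply, smul_eq_mul] at hv
  nlinarith

theorem eq_of_le (hx : IsExtremePt C x) (hu : MemQ C u) (hle : ∀ v, u v ≤ x v) : x = u := by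
  have hreflect : MemQ C fun v => 2 * x v - u v := by
    refine ⟨fun v => by linarith [hle v, hx.1.1 v], fun A hA => ?_⟩
    have hsum : ∑ v ∈ A, u v ≤ ∑ v ∈ A, x v := Finset.sum_le_sum fun v _ => hle v
    rw [Finset.sum_sub_distrib, ← Finset.mul_sum]
    linarith [hx.1.2 A hA]
  have hueq := hx.2 u _ hu hreflect (by funext v; ring)
  funext v
  linarith [congrFun hueq v]

theorem exists_tight (hx : IsExtremePt C x) {v : V} (hv : 0 < x v) :
    ∃ A ∈ C, v ∈ A ∧ ∑ w ∈ A, x w = 1 := by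
  by_contra! hslack
  replace hslack : ∀ A ∈ C, v ∈ A → 0 < ∑ w ∈ A, x w - 1 := fun A hA hvA =>
    sub_pos.2 ((hx.1.2 A hA).lt_of_ne' (hslack A hA hvA))
  obtain ⟨ε, ⟨hεv, hεA⟩, hε⟩ : ∃ ε, (ε ≤ x v ∧ ∀ A ∈ C, v ∈ A → ε ≤ ∑ w ∈ A, x w - 1) ∧ 0 < ε := by
    have hsmall : ∀ᶠ ε in 𝓝 (0 : ℝ), ε ≤ x v ∧ ∀ A ∈ C, v ∈ A → ε ≤ ∑ w ∈ A, x w - 1 :=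
      (eventually_le_nhds hv).and <| (eventually_all_finset C).2 fun A hA =>
        eventually_imp_distrib_left.2 fun hvA => eventually_le_nhds (hslack A hA hvA)
    exact ((hsmall.filter_mono nhdsWithin_le_nhds).and self_mem_nhdsWithin).exists (f := 𝓝[>] 0)
  have hlower : MemQ C fun w => x w - if w = v then ε else 0 := by
    refine ⟨fun w => ?_, fun A hA => ?_⟩
    · dsimp only
      split_ifs with h
      · subst h; linarith
      · linarith [hx.1.1 w]
    · rw [Finset.sum_sub_distrib, Finset.sum_ite_eq']
      split_ifs with hvA
      · linarith [hεA A hA hvA]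
      · linarith [hx.1.2 A hA]
  have hxv : x v = x v - ε := by
    simpa using congrFun (hx.eq_of_le hlower fun w => by split_ifs <;> linarith) v
  linarith

theorem eq_of_smul_le (hx : IsExtremePt C x) (hu0 : ∀ v, 0 ≤ u v)
    (hu : ∀ A ∈ C, ∑ v ∈ A, u v = 1) {μ : ℝ} (hμ : 0 < μ) (hle : ∀ v, μ * u v ≤ x v) :
    x = u := by
  have huQ : MemQ C u := ⟨hu0, fun A hA => (hu A hA).ge⟩
  rcases le_or_gt 1 μ with hμ1 | hμ1
  · exact hx.eq_of_le huQ fun v => (le_mul_of_one_le_left (hu0 v) hμ1).trans (hle v)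
  set z : V → ℝ := fun v => (x v - μ * u v) / (1 - μ)
  have hμ1' : 0 < 1 - μ := sub_pos.2 hμ1
  have hzQ : MemQ C z := by
    refine ⟨fun v => div_nonneg (sub_nonneg.2 (hle v)) hμ1'.le, fun A hA => ?_⟩
    rw [← Finset.sum_div, Finset.sum_sub_distrib, ← Finset.mul_sum, hu A hA, le_div_iff₀ hμ1']
    linarith [hx.1.2 A hA]
  have hxz : x = μ • u + (1 - μ) • z := by
    funext v
    simp only [z, Pi.add_apply, Pi.smul_apply, smul_eq_mul]
    field_simp
    ring
  have huz : u = z := hx.eq_of_mem_openSegment huQ hzQ ⟨μ, 1 - μ, hμ, hμ1', by ring, hxz.symm⟩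
  rw [hxz, ← huz, ← add_smul, add_sub_cancel, one_smul]

end IsExtremePt

end Polyhedron

section Contraction

variable {V : Type*} {C : Finset (Finset V)} {J : Finset V}

theorem exists_eq_sdiff_of_mem_minorCl {B : Finset V} (hB : B ∈ minorCl C ∅ J) :
    ∃ A ∈ C, B = A \ J := by
  obtain ⟨A, hA, rfl⟩ := Finset.mem_image.1 (Finset.mem_filter.1 hB).1
  exact ⟨A, (Finset.mem_filter.1 hA).1, rfl⟩

theorem exists_mem_minorCl_subset_sdiff {A : Finset V} (hA : A ∈ C) :
    ∃ B ∈ minorCl C ∅ J, B ⊆ A \ J := by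
  have hAJ : A \ J ∈ (C.filter fun A => A ∩ ∅ = ∅).image fun A => A \ J :=
    Finset.mem_image.2 ⟨A, Finset.mem_filter.2 ⟨hA, Finset.inter_empty A⟩, rfl⟩
  obtain ⟨B, hBA, hBmin⟩ := exists_minimal_le_of_wellFoundedLT _ _ hAJ
  exact ⟨B, Finset.mem_filter.2 ⟨hBmin.prop, fun B' hB' hB'B => hBmin.eq_of_le hB' hB'B⟩, hBA⟩

theorem MemQ.of_minorCl_empty {y : V → ℝ} (hy : MemQ (minorCl C ∅ J) y) : MemQ C y := by
  refine ⟨hy.1, fun A hA => ?_⟩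
  obtain ⟨B, hB, hBA⟩ := exists_mem_minorCl_subset_sdiff (J := J) hA
  exact (hy.2 B hB).trans <| Finset.sum_le_sum_of_subset_of_nonneg
    (hBA.trans Finset.sdiff_subset) fun v _ _ => hy.1 v

theorem MemQ.minorCl_empty {y : V → ℝ} (hy : MemQ C y) (hJ : ∀ j ∈ J, y j = 0) :
    MemQ (minorCl C ∅ J) y := by
  refine ⟨hy.1, fun B hB => ?_⟩
  obtain ⟨A, hA, rfl⟩ := exists_eq_sdiff_of_mem_minorCl hB
  have hsum := hy.2 A hA
  rwa [← Finset.sum_inter_add_sum_sdiff A J y,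
    Finset.sum_eq_zero fun v hv => hJ v (Finset.mem_inter.1 hv).2, zero_add] at hsum

theorem isExtremePt_minorCl_empty_iff {x : V → ℝ} :
    IsExtremePt (minorCl C ∅ J) x ↔ IsExtremePt C x ∧ ∀ j ∈ J, x j = 0 := by
  constructor
  · intro hx
    have hxJ : ∀ j ∈ J, x j = 0 := by
      intro j hj
      by_contra hne
      obtain ⟨B, hB, hjB, -⟩ := hx.exists_tight ((hx.1.1 j).lt_of_ne' hne)
      obtain ⟨A, -, rfl⟩ := exists_eq_sdiff_of_mem_minorCl hB
      exact (Finset.mem_sdiff.1 hjB).2 hj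
    refine ⟨⟨hx.1.of_minorCl_empty, fun y z hy hz hmid => ?_⟩, hxJ⟩
    have hyzJ : ∀ j ∈ J, y j = 0 ∧ z j = 0 := fun j hj => by
      have := congrFun hmid j
      constructor <;> linarith [hy.1 j, hz.1 j, hxJ j hj]
    exact hx.2 y z (hy.minorCl_empty fun j hj => (hyzJ j hj).1)
      (hz.minorCl_empty fun j hj => (hyzJ j hj).2) hmid
  · rintro ⟨hx, hxJ⟩
    exact ⟨hx.1.minorCl_empty hxJ,
      fun y z hy hz => hx.2 y z hy.of_minorCl_empty hz.of_minorCl_empty⟩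

theorem IdealClutter.minorCl_empty (hC : IdealClutter C) : IdealClutter (minorCl C ∅ J) :=
  fun x hx => hC x (isExtremePt_minorCl_empty_iff.1 hx).1

end Contraction

section Multipartite

variable {n : ℕ} {W : Fin n → Type*}

def partIndicator (i : Fin n) (e : Σ i, W i) : ℝ :=
  if e.1 = i then 1 else 0

theorem sum_partIndicator {i : Fin n} {A : Finset (Σ i, W i)}
    (hA : (A.filter fun e => e.1 = i).card = 1) : ∑ e ∈ A, partIndicator i e = 1 := by
  simp only [partIndicator, Finset.sum_boole, hA, Nat.cast_one]

theorem IsExtremePt.eq_partIndicator {i : Fin n} [Fintype (W i)] [Nonempty (W i)]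
    {C : Finset (Finset (Σ i, W i))} {x : (Σ i, W i) → ℝ} (hx : IsExtremePt C x)
    (hmulti : ∀ A ∈ C, (A.filter fun e => e.1 = i).card = 1) (hpos : ∀ b, x ⟨i, b⟩ ≠ 0) :
    x = partIndicator i := by
  obtain ⟨a, -, hmin⟩ :=
    Finset.exists_min_image Finset.univ (fun b => x ⟨i, b⟩) Finset.univ_nonempty
  refine hx.eq_of_smul_le (fun e => by unfold partIndicator; split_ifs <;> norm_num)
    (fun A hA => sum_partIndicator (hmulti A hA)) ((hx.1.1 _).lt_of_ne' (hpos a)) ?_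
  rintro ⟨j, b⟩
  unfold partIndicator
  split_ifs with hj
  · subst hj; simpa using hmin b (Finset.mem_univ b)
  · simpa using hx.1.1 _

end Multipartite

/-- a multipartite uniform clutter (a clutter over the disjoint union of
nonempty parts `W 1, …, W n` each of whose members meets each part exactly once) is ideal
if and only if all of its localizations are ideal, a localization being the minor obtained
by contracting exactly one element `α i` from each part. -/
theorem stmt5 {n : ℕ} {W : Fin n → Type*} [∀ i, Fintype (W i)] [∀ i, Nonempty (W i)]
    (C : Finset (Finset (Σ i, W i)))
    (hmulti : ∀ A ∈ C, ∀ i : Fin n, (A.filter fun e => e.1 = i).card = 1) :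
    IdealClutter C ↔
      ∀ α : ∀ i, W i,
        IdealClutter (minorCl C ∅
          (Finset.univ.image fun i => (⟨i, α i⟩ : Σ i, W i))) := by
  refine ⟨fun hC α => hC.minorCl_empty, fun hloc x hx v => ?_⟩
  by_cases hzero : ∀ i, ∃ b, x ⟨i, b⟩ = 0
  · choose α hα using hzero
    refine hloc α x (isExtremePt_minorCl_empty_iff.2 ⟨hx, ?_⟩) v
    simp only [Finset.mem_image, Finset.mem_univ, true_and]
    rintro _ ⟨i, rfl⟩
    exact hα i
  · push Not at hzero
    obtain ⟨i, hi⟩ := hzero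
    rw [hx.eq_partIndicator (fun A hA => hmulti A hA i) hi, partIndicator]
    split_ifs
    exacts [⟨1, by norm_num⟩, ⟨0, by norm_num⟩]
end
end

section
/- Let q = 2^k with k >= 2, and let S be a subspace of GF(q)^4 such that Matroid(S) is isomorphic to the uniform matroid U_{2,4}. Then the multipartite uniform clutter mult(S) has Delta_3 as a clutter minor. -/
open scoped Classical
noncomputable section

/-- `C` has (a clutter isomorphic to) `D` as a minor. -/
def HasMinorIso {V W : Type*} (C : Finset (Finset V)) (D : Finset (Finset W)) : Prop :=
  ∃ (I J : Finset V) (φ : W → V), Disjoint I J ∧ Function.Injective φ ∧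
    minorCl C I J = D.image fun A => A.image φ

/-- The support of a vector. -/
def suppF {ι : Type*} [Fintype ι] {F : Type*} [Zero F] (x : ι → F) : Finset ι :=
  Finset.univ.filter fun i => x i ≠ 0

/-- The circuits of `Matroid(S)`: the minimal supports of nonzero vectors of `S`. -/
def circuitSet {F : Type*} [Field F] {ι : Type*} [Fintype ι] (S : Submodule F (ι → F)) :
    Set (Finset ι) :=
  {C | (∃ x ∈ S, x ≠ 0 ∧ suppF x = C) ∧
       ∀ C', (∃ x ∈ S, x ≠ 0 ∧ suppF x = C') → C' ⊆ C → C' = C}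

/-- The multipartite uniform clutter of a subspace. -/
def multSub {F : Type*} [Field F] [Fintype F] {ι : Type*} [Fintype ι]
    (S : Submodule F (ι → F)) : Finset (Finset (Σ _ : ι, F)) :=
  (Finset.univ.filter fun x : ι → F => x ∈ S).image
    fun x => Finset.univ.image fun i => (⟨i, x i⟩ : Σ _ : ι, F)

/-- `Δ₃`, the clutter of edges of a triangle. -/
def Delta3 : Finset (Finset (Fin 3)) := {{0, 1}, {1, 2}, {0, 2}}

/-!
In characteristic `2`, the circuits `{0, 1, 3}` and `{1, 2, 3}` of `U_{2,4}` give vectors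
`x = (x₀, x₁, 0, x₃)` and `y = (0, x₁, y₂, y₃)` of `S`, and then `x + y = (x₀, 0, y₂, z₃)`.
Every nonzero vector of `S` has at most one zero entry, so `x₃, y₃, z₃ ≠ 0` and a vector of `S`
is determined by its entries `0` and `2`. Keep only `a = (0, x₀)`, `b = (1, x₁)`, `c = (2, y₂)`
and the set `J` of the `(i, 0)`, `i ≠ 3`, and the `(3, s)`, `s ≠ 0`, then contract `J`: the only
members of `mult S` that survive the deletion are those of `x`, `y`, `x + y`, and they become
`{a, b}`, `{b, c}`, `{a, c}`.
-/

section Circuits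

variable {F ι : Type*} [Field F] [Fintype ι] {S : Submodule F (ι → F)}

@[simp]
lemma mem_suppF {x : ι → F} {i : ι} : i ∈ suppF x ↔ x i ≠ 0 := by
  simp [suppF]

lemma exists_mem_circuitSet_subset_suppF {x : ι → F} (hx : x ∈ S) (hx0 : x ≠ 0) :
    ∃ C ∈ circuitSet S, C ⊆ suppF x := by
  obtain ⟨C, hCx, hC, hCmin⟩ := exists_minimal_le_of_wellFoundedLT
    (fun C => ∃ y ∈ S, y ≠ 0 ∧ suppF y = C) (suppF x) ⟨x, hx, hx0, rfl⟩
  exact ⟨C, ⟨hC, fun C' hC' hC'C => le_antisymm hC'C (hCmin hC' hC'C)⟩, hCx⟩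

lemma eq_zero_of_card_suppF_lt {r : ℕ} (hU : circuitSet S = {C | C.card = r}) {x : ι → F}
    (hx : x ∈ S) (hr : (suppF x).card < r) : x = 0 := by
  by_contra hx0
  obtain ⟨C, hC, hCx⟩ := exists_mem_circuitSet_subset_suppF hx hx0
  rw [hU] at hC
  exact (Finset.card_le_card hCx).not_gt (hC ▸ hr)

end Circuits

section UniformRankTwo

variable {F : Type*} [Field F] {S : Submodule F (Fin 4 → F)}

lemma eq_of_apply_eq_of_apply_eq (hU : circuitSet S = {C | C.card = 3}) {v w : Fin 4 → F}
    (hv : v ∈ S) (hw : w ∈ S) {i j : Fin 4} (hij : i ≠ j) (hi : v i = w i) (hj : v j = w j) :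
    v = w := by
  have hsupp : suppF (v - w) ⊆ {i, j}ᶜ := by
    intro l hl
    rw [mem_suppF, Pi.sub_apply, sub_ne_zero] at hl
    simp only [Finset.mem_compl, Finset.mem_insert, Finset.mem_singleton, not_or]
    exact ⟨fun h => hl (h ▸ hi), fun h => hl (h ▸ hj)⟩
  have hcard : ({i, j}ᶜ : Finset (Fin 4)).card = 2 := by
    rw [Finset.card_compl, Finset.card_pair hij, Fintype.card_fin]
  refine sub_eq_zero.mp <| eq_zero_of_card_suppF_lt hU (S.sub_mem hv hw) ?_
  have := Finset.card_le_card hsupp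
  omega

lemma apply_three_ne_zero (hU : circuitSet S = {C | C.card = 3}) {w : Fin 4 → F} (hw : w ∈ S)
    {i j : Fin 4} (hi3 : i ≠ 3) (hi : w i = 0) (hj : w j ≠ 0) : w 3 ≠ 0 := fun h3 =>
  hj (congrFun (eq_of_apply_eq_of_apply_eq hU hw S.zero_mem hi3 hi h3) j)

lemma exists_triangle_vectors (hU : circuitSet S = {C | C.card = 3}) :
    ∃ x ∈ S, ∃ y ∈ S, x 0 ≠ 0 ∧ x 1 ≠ 0 ∧ x 2 = 0 ∧ y 0 = 0 ∧ y 1 = x 1 ∧ y 2 ≠ 0 := by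
  have hcirc : ∀ C : Finset (Fin 4), C.card = 3 → ∃ v ∈ S, v ≠ 0 ∧ suppF v = C := fun C hC =>
    (show C ∈ circuitSet S by rw [hU]; exact hC).1
  obtain ⟨x, hx, -, hxs⟩ := hcirc {0, 1, 3} rfl
  obtain ⟨y, hy, -, hys⟩ := hcirc {1, 2, 3} rfl
  have hx' : ∀ i, x i ≠ 0 ↔ i ∈ ({0, 1, 3} : Finset (Fin 4)) := fun i => by rw [← hxs, mem_suppF]
  have hy' : ∀ i, y i ≠ 0 ↔ i ∈ ({1, 2, 3} : Finset (Fin 4)) := fun i => by rw [← hys, mem_suppF]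
  have hx1 : x 1 ≠ 0 := by simpa using hx' 1
  have hy0 : y 0 = 0 := by simpa using hy' 0
  have hy1 : y 1 ≠ 0 := by simpa using hy' 1
  have hy2 : y 2 ≠ 0 := by simpa using hy' 2
  exact ⟨x, hx, (x 1 / y 1) • y, S.smul_mem _ hy, by simpa using hx' 0, hx1,
    by simpa using hx' 2, by simp [hy0], by simp [hy1], by simp [hx1, hy1, hy2]⟩

end UniformRankTwo

section Clutter

variable {V : Type*}

lemma minimalSets_eq_self_of_card_eq {𝒜 : Finset (Finset V)} {n : ℕ}
    (h𝒜 : ∀ A ∈ 𝒜, A.card = n) : minimalSets 𝒜 = 𝒜 :=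
  Finset.filter_true_of_mem fun A hA B hB hBA =>
    Finset.eq_of_subset_of_card_le hBA (by rw [h𝒜 A hA, h𝒜 B hB])

lemma hasMinorIso_Delta3_of_image_eq {C : Finset (Finset V)} {I J : Finset V} {a b c : V}
    (hIJ : Disjoint I J) (hab : a ≠ b) (hac : a ≠ c) (hbc : b ≠ c)
    (h : (C.filter fun A => A ∩ I = ∅).image (· \ J) = {{a, b}, {b, c}, {a, c}}) :
    HasMinorIso C Delta3 := by
  refine ⟨I, J, ![a, b, c], hIJ, fun i j hij => ?_, ?_⟩
  · fin_cases i <;> fin_cases j <;> simp_all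
  · rw [minorCl, h, minimalSets_eq_self_of_card_eq (n := 2) (by simp [hab, hac, hbc])]
    simp [Delta3]

end Clutter

-- `minorCl` uses classical decidable equality on its ground type; dropping the `Sigma` instances
-- makes the finset operations on `Σ _ : ι, F` below use that same instance, so that `rw` matches.
attribute [-instance] instDecidableEqSigma Sigma.instDecidableEqSigma

section Multipartite

variable {ι F : Type*} [Fintype ι]

def vecGraph (w : ι → F) : Finset (Σ _ : ι, F) :=
  Finset.univ.image fun i => ⟨i, w i⟩

lemma mem_vecGraph {w : ι → F} {e : Σ _ : ι, F} : e ∈ vecGraph w ↔ e.2 = w e.1 := by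
  obtain ⟨i, s⟩ := e
  simp [vecGraph, eq_comm]

lemma vecGraph_inter_eq_empty_iff {w : ι → F} {I : Finset (Σ _ : ι, F)} :
    vecGraph w ∩ I = ∅ ↔ ∀ i, ⟨i, w i⟩ ∉ I := by
  simp [Finset.eq_empty_iff_forall_notMem, mem_vecGraph, Sigma.forall]

def zeroExceptAt [Fintype F] [Zero F] (k : ι) : Finset (Σ _ : ι, F) :=
  Finset.univ.filter fun e => (e.2 = 0 ↔ e.1 ≠ k)

lemma mem_vecGraph_sdiff_zeroExceptAt [Fintype F] [Zero F] {w : ι → F} {k : ι} (hk : w k ≠ 0)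
    {e : Σ _ : ι, F} : e ∈ vecGraph w \ zeroExceptAt k ↔ e.1 ≠ k ∧ e.2 = w e.1 ∧ w e.1 ≠ 0 := by
  obtain ⟨i, s⟩ := e
  by_cases hi : i = k
  · subst hi
    simp +contextual [zeroExceptAt, mem_vecGraph, hk]
  · simp +contextual [zeroExceptAt, mem_vecGraph, hi]

variable [Field F] [Fintype F] {S : Submodule F (ι → F)}

lemma mem_multSub {A : Finset (Σ _ : ι, F)} : A ∈ multSub S ↔ ∃ w ∈ S, vecGraph w = A := by
  simp only [multSub, vecGraph, Finset.mem_image, Finset.mem_filter, Finset.mem_univ, true_and]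
  congr!

lemma filter_multSub_inter_eq_empty {I : Finset (Σ _ : ι, F)} {T : Finset (ι → F)}
    (hT : ∀ w, w ∈ T ↔ w ∈ S ∧ ∀ i, ⟨i, w i⟩ ∉ I) :
    (multSub S).filter (fun A => A ∩ I = ∅) = T.image vecGraph := by
  ext A
  simp only [Finset.mem_filter, Finset.mem_image, mem_multSub, hT]
  constructor
  · rintro ⟨⟨w, hw, rfl⟩, hI⟩
    exact ⟨w, ⟨hw, vecGraph_inter_eq_empty_iff.1 hI⟩, rfl⟩
  · rintro ⟨w, ⟨hw, hI⟩, rfl⟩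
    exact ⟨⟨w, hw, rfl⟩, vecGraph_inter_eq_empty_iff.2 hI⟩

end Multipartite

section Triangle

variable {F : Type*} [Field F] [Fintype F] {S : Submodule F (Fin 4 → F)}

lemma eq_or_eq_or_eq_add (hU : circuitSet S = {C | C.card = 3}) {x y w : Fin 4 → F}
    (hx : x ∈ S) (hy : y ∈ S) (hw : w ∈ S) (hx2 : x 2 = 0) (hy0 : y 0 = 0)
    (hwK : ∀ i, ⟨i, w i⟩ ∈ zeroExceptAt 3 ∪ {⟨0, x 0⟩, ⟨1, x 1⟩, ⟨2, y 2⟩}) :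
    w = x ∨ w = y ∨ w = x + y := by
  have h0 := hwK 0
  have h2 := hwK 2
  have h3 := hwK 3
  simp only [zeroExceptAt, ne_eq, Finset.union_insert, Finset.union_singleton,
    Finset.mem_insert, Sigma.mk.injEq, heq_eq_eq, true_and, zero_ne_one, false_and, Fin.reduceEq,
    Finset.mem_filter, Finset.mem_univ, not_false_eq_true, iff_true, false_or, not_true_eq_false,
    iff_false] at h0 h2 h3
  have key := fun (v : Fin 4 → F) (hv : v ∈ S) =>
    eq_of_apply_eq_of_apply_eq hU hw hv (show (0 : Fin 4) ≠ 2 by decide)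
  rcases h0 with h0 | h0 <;> rcases h2 with h2 | h2
  · exact Or.inr (Or.inr (key _ (S.add_mem hx hy) (by simp [h0, hy0]) (by simp [h2, hx2])))
  · exact Or.inl (key x hx h0 (by rw [h2, hx2]))
  · exact Or.inr (Or.inl (key y hy (by rw [h0, hy0]) h2))
  · exact absurd (congrFun (key 0 S.zero_mem (by simp [h0]) (by simp [h2])) 3) h3

theorem hasMinorIso_multSub_Delta3 [CharP F 2] (hU : circuitSet S = {C | C.card = 3}) :
    HasMinorIso (multSub S) Delta3 := by
  obtain ⟨x, hx, y, hy, hx0, hx1, hx2, hy0, hy1, hy2⟩ := exists_triangle_vectors hU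
  have hz1 : x 1 + y 1 = 0 := by rw [hy1, CharTwo.add_self_eq_zero]
  have hx3 : x 3 ≠ 0 := apply_three_ne_zero hU hx (by decide) hx2 hx0
  have hy3 : y 3 ≠ 0 := apply_three_ne_zero hU hy (by decide) hy0 hy2
  have hz3 : x 3 + y 3 ≠ 0 :=
    apply_three_ne_zero hU (S.add_mem hx hy) (j := 0) (by decide) hz1 (by simpa [hy0] using hx0)
  set J : Finset (Σ _ : Fin 4, F) := zeroExceptAt 3
  set a : Σ _ : Fin 4, F := ⟨0, x 0⟩
  set b : Σ _ : Fin 4, F := ⟨1, x 1⟩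
  set c : Σ _ : Fin 4, F := ⟨2, y 2⟩
  have hT (w : Fin 4 → F) :
      w ∈ ({x, y, x + y} : Finset _) ↔ w ∈ S ∧ ∀ i, ⟨i, w i⟩ ∉ (J ∪ {a, b, c})ᶜ := by
    simp only [Finset.mem_compl, not_not, Finset.mem_insert, Finset.mem_singleton]
    constructor
    · rintro (rfl | rfl | rfl)
      · exact ⟨hx, fun i => by fin_cases i <;> simp [J, zeroExceptAt, a, b, hx2, hx3]⟩
      · exact ⟨hy, fun i => by fin_cases i <;> simp [J, zeroExceptAt, b, c, hy0, hy1, hy3]⟩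
      · exact ⟨S.add_mem hx hy, fun i => by
          fin_cases i <;> simp [J, zeroExceptAt, a, c, hx2, hy0, hz1, hz3]⟩
    · rintro ⟨hw, hwK⟩
      exact eq_or_eq_or_eq_add hU hx hy hw hx2 hy0 hwK
  have hxJ : vecGraph x \ J = {a, b} := Finset.ext fun ⟨i, s⟩ => by
    fin_cases i <;> simp [J, mem_vecGraph_sdiff_zeroExceptAt hx3, a, b, hx0, hx1, hx2]
  have hyJ : vecGraph y \ J = {b, c} := Finset.ext fun ⟨i, s⟩ => by
    fin_cases i <;> simp [J, mem_vecGraph_sdiff_zeroExceptAt hy3, b, c, hx1, hy0, hy1, hy2]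
  have hzJ : vecGraph (x + y) \ J = {a, c} := Finset.ext fun ⟨i, s⟩ => by
    fin_cases i <;> simp [J, mem_vecGraph_sdiff_zeroExceptAt (w := x + y) hz3, a, c, hx0, hx2,
      hy0, hy2, hz1]
  refine hasMinorIso_Delta3_of_image_eq (I := (J ∪ {a, b, c})ᶜ) (J := J) (a := a) (b := b) (c := c)
    (disjoint_compl_left_iff.2 Finset.subset_union_left) (by simp [a, b]) (by simp [a, c])
    (by simp [b, c]) ?_
  rw [filter_multSub_inter_eq_empty hT]
  simp only [Finset.image_insert, Finset.image_singleton, hxJ, hyJ, hzJ]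

end Triangle

theorem stmt17_general {F : Type*} [Field F] [Fintype F] (k : ℕ)
    (hq : Fintype.card F = 2 ^ k) (S : Submodule F (Fin 4 → F))
    (hU : circuitSet S = {C : Finset (Fin 4) | C.card = 3}) :
    HasMinorIso (multSub S) Delta3 := by
  have : CharP F 2 := charP_of_card_eq_prime_pow hq
  exact hasMinorIso_multSub_Delta3 hU

/-- let `q = 2^k` with `k ≥ 2` and let `S ⊆ GF(q)^4` be a subspace whose
matroid is (isomorphic to) `U_{2,4}`, i.e. whose circuits are exactly the 3-element
subsets of `[4]`.  Then `mult S` has `Δ₃` as a clutter minor. -/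
theorem stmt17 {F : Type*} [Field F] [Fintype F] (k : ℕ) (hk : 2 ≤ k)
    (hq : Fintype.card F = 2 ^ k) (S : Submodule F (Fin 4 → F))
    (hU : circuitSet S = {C : Finset (Fin 4) | C.card = 3}) :
    HasMinorIso (multSub S) Delta3 :=
  stmt17_general k hq S hU
end
end
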